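/- Let (α₁,α₂,α₃) be a triple of elements of [0,1] with α₁ ≥ α₂ ≥ α₃. If any of the following hold, then (α₁,α₂,α₃) is not a forcing triple: (a) α₁ < (1+τ²)/2; (b) α₂ < 1/4; (c) α₁+α₂ < 1; (d) α₁ = x²+y² and α₂ = x²+(1−x−y)² for some non-negative reals x,y with x+y ≤ 1 and 2x²+(1−x−y)² < 1. -/

import Mathlib

/-- The number of edges of a simple graph (as a cardinal via `Set.ncard`). -/
noncomputable def edgeCount {V : Type*} (G : SimpleGraph V) : ℕ := G.edgeSet.ncard

/-- A 3-colouring template `G` contains a rainbow triangle if there are three distinct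
vertices and a permutation of the colours assigning the three edges of the triangle
to distinct colour classes. -/
def HasRainbowTriangle {V : Type*} (G : Fin 3 → SimpleGraph V) : Prop :=
  ∃ u v w : V, u ≠ v ∧ v ≠ w ∧ u ≠ w ∧
    ∃ σ : Equiv.Perm (Fin 3),
      (G (σ 0)).Adj u v ∧ (G (σ 1)).Adj v w ∧ (G (σ 2)).Adj u w

noncomputable def tau : ℝ := (4 - Real.sqrt 7) / 9

/-- `(α₁, α₂, α₃)` is a forcing triple: for all sufficiently large `n`, every `n`-vertex
3-colouring template whose colour classes satisfy
`|E(Gᵢ)| > min(αᵢ n²/2, C(n,2) - 1)` contains a rainbow triangle. -/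
def ForcingTriple (α₁ α₂ α₃ : ℝ) : Prop :=
  ∃ N₀ : ℕ, ∀ n : ℕ, n ≥ N₀ → ∀ G : Fin 3 → SimpleGraph (Fin n),
    (∀ i : Fin 3,
      (edgeCount (G i) : ℝ) >
        min (![α₁, α₂, α₃] i * (n:ℝ)^2 / 2) ((n.choose 2 : ℝ) - 1)) →
    HasRainbowTriangle G

/-- embedding of `Fin m` into `Fin n` with offset `o`. -/
def emb (o m n : ℕ) (h : o + m ≤ n) : Fin m ↪ Fin n :=
  ⟨fun i => ⟨o + i.val, by have := i.isLt; omega⟩, fun i j hij => by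
    simp only [Fin.mk.injEq] at hij
    exact Fin.ext (by omega)⟩

/-- The clique on `[o, o+m)` inside `Fin n`. -/
def cliq (o m n : ℕ) (h : o + m ≤ n) : SimpleGraph (Fin n) :=
  SimpleGraph.map (emb o m n h) ⊤

lemma cliq_adj {o m n : ℕ} (h : o + m ≤ n) (u v : Fin n) :
    (cliq o m n h).Adj u v ↔
      u ≠ v ∧ o ≤ u.val ∧ u.val < o + m ∧ o ≤ v.val ∧ v.val < o + m := by
  constructor
  · rintro ⟨-, i, j, hij, rfl, rfl⟩
    refine ⟨?_, ?_, ?_, ?_, ?_⟩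
    · intro hc
      apply hij.ne
      have : o + i.val = o + j.val := congrArg Fin.val hc
      exact Fin.ext (by omega)
    all_goals simp [emb, DFunLike.coe]
  · rintro ⟨hne, h1, h2, h3, h4⟩
    refine ⟨hne, ⟨u.val - o, by omega⟩, ⟨v.val - o, by omega⟩, ?_, ?_, ?_⟩
    · intro hc
      simp only [Fin.mk.injEq] at hc
      exact hne (Fin.ext (by omega))
    · exact Fin.ext (by simp [emb, DFunLike.coe]; omega)
    · exact Fin.ext (by simp [emb, DFunLike.coe]; omega)

lemma edgeSet_map' {V W : Type*} (f : V ↪ W) (G : SimpleGraph V) :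
    (G.map f).edgeSet = Sym2.map f '' G.edgeSet := by
  ext e
  induction e with
  | _ u v =>
    simp only [SimpleGraph.mem_edgeSet, SimpleGraph.map_adj, Set.mem_image]
    constructor
    · rintro ⟨u', v', h, rfl, rfl⟩
      exact ⟨s(u', v'), h, rfl⟩
    · rintro ⟨e', he', hmap⟩
      induction e' with
      | _ a b =>
        rw [Sym2.map_pair_eq, Sym2.eq_iff] at hmap
        rcases hmap with ⟨rfl, rfl⟩ | ⟨rfl, rfl⟩
        · exact ⟨a, b, he', rfl, rfl⟩
        · exact ⟨b, a, he'.symm, rfl, rfl⟩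

lemma edgeCount_map {V W : Type*} (f : V ↪ W) (G : SimpleGraph V) :
    edgeCount (G.map f) = edgeCount G := by
  rw [edgeCount, edgeSet_map', Set.ncard_image_of_injective _ (Sym2.map.injective f.injective)]
  rfl

lemma edgeCount_top (m : ℕ) : edgeCount (⊤ : SimpleGraph (Fin m)) = m.choose 2 := by
  have h := SimpleGraph.card_edgeFinset_top_eq_card_choose_two (V := Fin m)
  rw [Fintype.card_fin] at h
  rw [edgeCount, ← h, ← Set.ncard_coe_finset, SimpleGraph.coe_edgeFinset]

lemma edgeCount_cliq (o m n : ℕ) (h : o + m ≤ n) :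
    edgeCount (cliq o m n h) = m.choose 2 := by
  rw [cliq, edgeCount_map, edgeCount_top]

lemma edgeCount_sup_cliq {o₁ m₁ o₂ m₂ n : ℕ} (h₁ : o₁ + m₁ ≤ n) (h₂ : o₂ + m₂ ≤ n)
    (hd : o₁ + m₁ ≤ o₂) :
    edgeCount (cliq o₁ m₁ n h₁ ⊔ cliq o₂ m₂ n h₂) = m₁.choose 2 + m₂.choose 2 := by
  rw [edgeCount, SimpleGraph.edgeSet_sup, Set.ncard_union_eq ?_ (Set.toFinite _) (Set.toFinite _)]
  · rw [← edgeCount_cliq o₁ m₁ n h₁, ← edgeCount_cliq o₂ m₂ n h₂]; rfl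
  · rw [Set.disjoint_left]
    intro e he1 he2
    induction e with
    | _ u v =>
      rw [SimpleGraph.mem_edgeSet, cliq_adj] at he1 he2
      omega

lemma edgeCount_sdiff_cliq {o m n : ℕ} (h : o + m ≤ n) :
    edgeCount ((⊤ : SimpleGraph (Fin n)) \ cliq o m n h) = n.choose 2 - m.choose 2 := by
  rw [edgeCount, SimpleGraph.edgeSet_sdiff,
    Set.ncard_diff (SimpleGraph.edgeSet_mono le_top) (Set.toFinite _)]
  rw [← edgeCount_cliq o m n h, ← edgeCount_top n]; rfl

lemma noRainbow_of {V : Type*} (G : Fin 3 → SimpleGraph V)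
    (core : ∀ x y z : V, (G 0).Adj x y → (G 1).Adj y z → (G 2).Adj x z → False) :
    ¬ HasRainbowTriangle G := by
  rintro ⟨u, v, w, huv, hvw, huw, σ, h0, h1, h2⟩
  have tri : ∀ i : Fin 3, i = 0 ∨ i = 1 ∨ i = 2 := by decide
  have i01 : σ 0 ≠ σ 1 := fun h => absurd (σ.injective h) (by decide)
  have i02 : σ 0 ≠ σ 2 := fun h => absurd (σ.injective h) (by decide)
  have i12 : σ 1 ≠ σ 2 := fun h => absurd (σ.injective h) (by decide)
  rcases tri (σ 0) with e0 | e0 | e0 <;> rcases tri (σ 1) with e1 | e1 | e1 <;>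
    rcases tri (σ 2) with e2 | e2 | e2 <;>
    rw [e0] at h0 <;> rw [e1] at h1 <;> rw [e2] at h2 <;>
    first
      | exact i01 (e0.trans e1.symm)
      | exact i02 (e0.trans e2.symm)
      | exact i12 (e1.trans e2.symm)
      | exact core u v w h0 h1 h2
      | exact core v u w h0.symm h2 h1
      | exact core w v u h1.symm h0.symm h2.symm
      | exact core w u v h2.symm h0 h1.symm
      | exact core v w u h1 h2.symm h0.symm
      | exact core u w v h2 h1.symm h0

lemma choose2_lb (m : ℕ) (s : ℝ) (hs : 0 ≤ s) (h : s - 2 ≤ (m:ℝ)) :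
    s^2/2 - 3*s - 3 ≤ (m.choose 2 : ℝ) := by
  rw [Nat.cast_choose_two]
  have hm0 : (0:ℝ) ≤ m := Nat.cast_nonneg m
  have hm : (m:ℝ) = 0 ∨ 1 ≤ (m:ℝ) := by
    rcases Nat.eq_zero_or_pos m with h0 | h0
    · left; exact_mod_cast h0
    · right; exact_mod_cast h0
  rcases hm with hm | hm
  · rw [hm]; nlinarith
  · nlinarith [sq_nonneg ((m:ℝ) - s + 2), sq_nonneg (s - 2)]

lemma choose2_ub (m : ℕ) (s : ℝ) (hs : 0 ≤ s) (h : (m:ℝ) ≤ s + 1) :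
    (m.choose 2 : ℝ) ≤ s^2/2 + s := by
  rw [Nat.cast_choose_two]
  have hm0 : (0:ℝ) ≤ m := Nat.cast_nonneg m
  have hm : (m:ℝ) = 0 ∨ 1 ≤ (m:ℝ) := by
    rcases Nat.eq_zero_or_pos m with h0 | h0
    · left; exact_mod_cast h0
    · right; exact_mod_cast h0
  rcases hm with hm | hm
  · rw [hm]; nlinarith
  · nlinarith

lemma lemA (α₁ α₂ α₃ x y : ℝ) (hx : 0 ≤ x) (hy : 0 ≤ y) (hxy : x + y ≤ 1)
    (h1 : α₁ < x^2 + y^2) (h2 : α₂ < x^2 + (1-x-y)^2) (h3 : α₃ < 1 - x^2) :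
    ¬ ForcingTriple α₁ α₂ α₃ := by
  set z : ℝ := 1 - x - y with hzdef
  have hz : 0 ≤ z := by simp [hzdef]; linarith
  have hx1 : x ≤ 1 := by linarith
  have hy1 : y ≤ 1 := by linarith
  have hz1 : z ≤ 1 := by simp [hzdef]; linarith
  set ε : ℝ := min (x^2 + y^2 - α₁) (min (x^2 + z^2 - α₂) (1 - x^2 - α₃)) with hεdef
  have hε : 0 < ε := by
    apply lt_min (by linarith) (lt_min (by linarith) (by linarith))
  have hε1 : ε ≤ x^2 + y^2 - α₁ := min_le_left _ _
  have hε2 : ε ≤ x^2 + z^2 - α₂ := le_trans (min_le_right _ _) (min_le_left _ _)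
  have hε3 : ε ≤ 1 - x^2 - α₃ := le_trans (min_le_right _ _) (min_le_right _ _)
  rintro ⟨N₀, hN⟩
  set n : ℕ := max N₀ (max 13 ⌈26/ε⌉₊) with hndef
  have hn13 : (13:ℝ) ≤ (n:ℝ) := by
    have : (13:ℕ) ≤ n := le_trans (le_max_left _ _) (le_max_right _ _)
    exact_mod_cast this
  have hn0 : (0:ℝ) ≤ (n:ℝ) := by linarith
  have hεn : 26 ≤ ε * n := by
    have h26 : (⌈26/ε⌉₊ : ℕ) ≤ n := le_trans (le_max_right _ _) (le_max_right _ _)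
    have : 26/ε ≤ (n:ℝ) := le_trans (Nat.le_ceil _) (by exact_mod_cast h26)
    calc (26:ℝ) = ε * (26/ε) := by field_simp
    _ ≤ ε * n := by
      apply mul_le_mul_of_nonneg_left this (le_of_lt hε)
  have hεn2 : 26 * (n:ℝ) ≤ ε * (n:ℝ)^2 := by nlinarith
  -- part sizes
  set a : ℕ := ⌈x * n⌉₊ with hadef
  have han : a ≤ n := by
    apply Nat.ceil_le.mpr
    calc x * n ≤ 1 * n := by apply mul_le_mul_of_nonneg_right hx1 hn0
    _ = (n:ℝ) := by ring
  set b : ℕ := min ⌈y * n⌉₊ (n - a) with hbdef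
  have hab : a + b ≤ n := by omega
  set c : ℕ := n - a - b with hcdef
  have habc : (a + b) + c = n := by omega
  have habc' : (a + b) + c ≤ n := by omega
  -- real bounds
  have hxn0 : 0 ≤ x * n := mul_nonneg hx hn0
  have hyn0 : 0 ≤ y * n := mul_nonneg hy hn0
  have hzn0 : 0 ≤ z * n := mul_nonneg hz hn0
  have haL : x * n ≤ (a:ℝ) := Nat.le_ceil _
  have haU : (a:ℝ) ≤ x * n + 1 := le_of_lt (Nat.ceil_lt_add_one hxn0)
  have hbL : y * n - 1 ≤ (b:ℝ) := by
    rcases min_choice ⌈y * n⌉₊ (n - a) with hm | hm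
    · rw [hbdef, hm]
      linarith [Nat.le_ceil (y * n)]
    · rw [hbdef, hm]
      have : ((n - a : ℕ) : ℝ) = (n:ℝ) - a := by
        rw [Nat.cast_sub han]
      rw [this]
      have hzn : 0 ≤ z * n := hzn0
      have : x * n + y * n + z * n = (n:ℝ) := by rw [hzdef]; ring
      linarith
  have hbU : (b:ℝ) ≤ y * n + 1 := by
    have : (b:ℕ) ≤ ⌈y * n⌉₊ := min_le_left _ _
    have h' : ((b:ℕ):ℝ) ≤ (⌈y * n⌉₊ : ℝ) := by exact_mod_cast this
    linarith [le_of_lt (Nat.ceil_lt_add_one hyn0)]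
  have hcL : z * n - 2 ≤ (c:ℝ) := by
    have : ((c:ℕ):ℝ) = (n:ℝ) - a - b := by
      rw [hcdef]
      have h1 : ((n - a - b : ℕ) : ℝ) = ((n - a:ℕ):ℝ) - b := by
        rw [Nat.cast_sub (by omega)]
      rw [h1, Nat.cast_sub han]
    rw [this]
    have hsumn : x * n + y * n + z * n = (n:ℝ) := by rw [hzdef]; ring
    linarith
  -- the graphs
  have hA : 0 + a ≤ n := by omega
  have hB : a + b ≤ n := hab
  have hC : (a + b) + c ≤ n := habc'
  set G : Fin 3 → SimpleGraph (Fin n) :=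
    ![cliq 0 a n hA ⊔ cliq a b n hB,
      cliq 0 a n hA ⊔ cliq (a+b) c n hC,
      (⊤ : SimpleGraph (Fin n)) \ cliq 0 a n hA] with hGdef
  have hrainbow := hN n (le_max_left _ _) G
  have hnoR : ¬ HasRainbowTriangle G := by
    apply noRainbow_of
    intro p q r hpq hqr hpr
    have e0 : (G 0) = cliq 0 a n hA ⊔ cliq a b n hB := rfl
    have e1 : (G 1) = cliq 0 a n hA ⊔ cliq (a+b) c n hC := rfl
    have e2 : (G 2) = (⊤ : SimpleGraph (Fin n)) \ cliq 0 a n hA := rfl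
    rw [e0, SimpleGraph.sup_adj, cliq_adj, cliq_adj] at hpq
    rw [e1, SimpleGraph.sup_adj, cliq_adj, cliq_adj] at hqr
    rw [e2, SimpleGraph.sdiff_adj, SimpleGraph.top_adj, cliq_adj] at hpr
    apply hpr.2
    refine ⟨hpr.1, ?_, ?_, ?_, ?_⟩ <;> omega
  have hcount0 : edgeCount (G 0) = a.choose 2 + b.choose 2 :=
    edgeCount_sup_cliq hA hB (by omega)
  have hcount1 : edgeCount (G 1) = a.choose 2 + c.choose 2 :=
    edgeCount_sup_cliq hA hC (by omega)
  have hcount2 : edgeCount (G 2) = n.choose 2 - a.choose 2 := edgeCount_sdiff_cliq hA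
  have hle2 : a.choose 2 ≤ n.choose 2 := Nat.choose_le_choose 2 han
  have lb1 := choose2_lb a (x*n) hxn0 (by linarith)
  have lb2 := choose2_lb b (y*n) hyn0 (by linarith)
  have lb3 := choose2_lb c (z*n) hzn0 (by linarith)
  have ub1 := choose2_ub a (x*n) hxn0 haU
  have hsq : (0:ℝ) ≤ (n:ℝ)^2 := sq_nonneg _
  have hxnn : x * (n:ℝ) ≤ 1 * n := mul_le_mul_of_nonneg_right hx1 hn0
  have hynn : y * (n:ℝ) ≤ 1 * n := mul_le_mul_of_nonneg_right hy1 hn0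
  have hznn : z * (n:ℝ) ≤ 1 * n := mul_le_mul_of_nonneg_right hz1 hn0
  have hα1 : α₁ * (n:ℝ)^2 ≤ (x^2+y^2-ε) * n^2 :=
    mul_le_mul_of_nonneg_right (by linarith) hsq
  have hα2 : α₂ * (n:ℝ)^2 ≤ (x^2+z^2-ε) * n^2 :=
    mul_le_mul_of_nonneg_right (by linarith) hsq
  have hα3 : α₃ * (n:ℝ)^2 ≤ (1-x^2-ε) * n^2 :=
    mul_le_mul_of_nonneg_right (by linarith) hsq
  have hnn : ((n:ℕ).choose 2 : ℝ) = (n:ℝ) * ((n:ℝ) - 1) / 2 := Nat.cast_choose_two (K := ℝ) n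
  clear_value z ε n a b c G
  apply hnoR
  apply hrainbow
  intro i
  fin_cases i
  · refine lt_of_le_of_lt (min_le_left _ _) ?_
    show ![α₁, α₂, α₃] 0 * (n:ℝ)^2/2 < (edgeCount (G 0) : ℝ)
    rw [hcount0]
    simp only [Matrix.cons_val_zero]
    push_cast
    linarith [lb1, lb2, hα1, hεn2, hn13, hxnn, hynn]
  · refine lt_of_le_of_lt (min_le_left _ _) ?_
    show ![α₁, α₂, α₃] 1 * (n:ℝ)^2/2 < (edgeCount (G 1) : ℝ)
    rw [hcount1]
    simp only [Matrix.cons_val_one, Matrix.head_cons]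
    push_cast
    linarith [lb1, lb3, hα2, hεn2, hn13, hxnn, hznn]
  · refine lt_of_le_of_lt (min_le_left _ _) ?_
    show ![α₁, α₂, α₃] 2 * (n:ℝ)^2/2 < (edgeCount (G 2) : ℝ)
    rw [hcount2]
    simp only [Matrix.cons_val_two, Matrix.tail_cons, Matrix.head_cons]
    rw [Nat.cast_sub hle2, hnn]
    linarith [ub1, hα3, hεn2, hn13, hxnn]

lemma lemB (α₁ α₂ α₃ β γ : ℝ) (hβ : 0 ≤ β) (hγ : 0 ≤ γ) (hβγ : β + γ ≤ 1)
    (h2 : α₂ < β^2) (h3 : α₃ < γ^2) : ¬ ForcingTriple α₁ α₂ α₃ := by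
  have hβ1 : β ≤ 1 := by linarith
  have hγ1 : γ ≤ 1 := by linarith
  set ε : ℝ := min (β^2 - α₂) (γ^2 - α₃) with hεdef
  have hε : 0 < ε := lt_min (by linarith) (by linarith)
  have hε2 : ε ≤ β^2 - α₂ := min_le_left _ _
  have hε3 : ε ≤ γ^2 - α₃ := min_le_right _ _
  rintro ⟨N₀, hN⟩
  set n : ℕ := max N₀ (max 13 ⌈26/ε⌉₊) with hndef
  have hn13 : (13:ℝ) ≤ (n:ℝ) := by
    have : (13:ℕ) ≤ n := le_trans (le_max_left _ _) (le_max_right _ _)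
    exact_mod_cast this
  have hn0 : (0:ℝ) ≤ (n:ℝ) := by linarith
  have hεn : 26 ≤ ε * n := by
    have h26 : (⌈26/ε⌉₊ : ℕ) ≤ n := le_trans (le_max_right _ _) (le_max_right _ _)
    have : 26/ε ≤ (n:ℝ) := le_trans (Nat.le_ceil _) (by exact_mod_cast h26)
    calc (26:ℝ) = ε * (26/ε) := by field_simp
    _ ≤ ε * n := by apply mul_le_mul_of_nonneg_left this (le_of_lt hε)
  have hεn2 : 26 * (n:ℝ) ≤ ε * (n:ℝ)^2 := by nlinarith
  set b : ℕ := ⌈β * n⌉₊ with hbdef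
  have hbn : b ≤ n := by
    apply Nat.ceil_le.mpr
    calc β * n ≤ 1 * n := by apply mul_le_mul_of_nonneg_right hβ1 hn0
    _ = (n:ℝ) := by ring
  set c : ℕ := min ⌈γ * n⌉₊ (n - b) with hcdef
  have hbc : b + c ≤ n := by omega
  have hβn0 : 0 ≤ β * n := mul_nonneg hβ hn0
  have hγn0 : 0 ≤ γ * n := mul_nonneg hγ hn0
  have hbL : β * n ≤ (b:ℝ) := Nat.le_ceil _
  have hcL : γ * n - 1 ≤ (c:ℝ) := by
    rcases min_choice ⌈γ * n⌉₊ (n - b) with hm | hm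
    · rw [hcdef, hm]
      linarith [Nat.le_ceil (γ * n)]
    · rw [hcdef, hm]
      have hc : ((n - b : ℕ) : ℝ) = (n:ℝ) - b := by rw [Nat.cast_sub hbn]
      rw [hc]
      have hbU : (b:ℝ) ≤ β * n + 1 := le_of_lt (Nat.ceil_lt_add_one hβn0)
      have : β * n + γ * n ≤ 1 * n := by
        have := mul_le_mul_of_nonneg_right hβγ hn0
        linarith
      linarith
  have hA : 0 + b ≤ n := by omega
  have hB : b + c ≤ n := hbc
  set G : Fin 3 → SimpleGraph (Fin n) :=
    ![(⊤ : SimpleGraph (Fin n)), cliq 0 b n hA, cliq b c n hB] with hGdef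
  have hrainbow := hN n (le_max_left _ _) G
  have hnoR : ¬ HasRainbowTriangle G := by
    apply noRainbow_of
    intro p q r hpq hqr hpr
    have e1 : (G 1) = cliq 0 b n hA := rfl
    have e2 : (G 2) = cliq b c n hB := rfl
    rw [e1, cliq_adj] at hqr
    rw [e2, cliq_adj] at hpr
    omega
  have hcount0 : edgeCount (G 0) = n.choose 2 := edgeCount_top n
  have hcount1 : edgeCount (G 1) = b.choose 2 := edgeCount_cliq 0 b n hA
  have hcount2 : edgeCount (G 2) = c.choose 2 := edgeCount_cliq b c n hB
  have lb1 := choose2_lb b (β*n) hβn0 (by linarith)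
  have lb2 := choose2_lb c (γ*n) hγn0 (by linarith)
  have hsq : (0:ℝ) ≤ (n:ℝ)^2 := sq_nonneg _
  have hβnn : β * (n:ℝ) ≤ 1 * n := mul_le_mul_of_nonneg_right hβ1 hn0
  have hγnn : γ * (n:ℝ) ≤ 1 * n := mul_le_mul_of_nonneg_right hγ1 hn0
  have hα2 : α₂ * (n:ℝ)^2 ≤ (β^2-ε) * n^2 := mul_le_mul_of_nonneg_right (by linarith) hsq
  have hα3 : α₃ * (n:ℝ)^2 ≤ (γ^2-ε) * n^2 := mul_le_mul_of_nonneg_right (by linarith) hsq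
  clear_value ε n b c G
  apply hnoR
  apply hrainbow
  intro i
  fin_cases i
  · refine lt_of_le_of_lt (min_le_right _ _) ?_
    show ((n.choose 2 : ℝ) - 1) < (edgeCount (G 0) : ℝ)
    rw [hcount0]
    linarith
  · refine lt_of_le_of_lt (min_le_left _ _) ?_
    show ![α₁, α₂, α₃] 1 * (n:ℝ)^2/2 < (edgeCount (G 1) : ℝ)
    rw [hcount1]
    simp only [Matrix.cons_val_one, Matrix.head_cons, Matrix.cons_val_zero]
    linarith [lb1, hα2, hεn2, hn13, hβnn]
  · refine lt_of_le_of_lt (min_le_left _ _) ?_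
    show ![α₁, α₂, α₃] 2 * (n:ℝ)^2/2 < (edgeCount (G 2) : ℝ)
    rw [hcount2]
    simp only [Matrix.cons_val_two, Matrix.tail_cons, Matrix.head_cons]
    linarith [lb2, hα3, hεn2, hn13, hγnn]

lemma lemC (α₁ α₂ α₃ : ℝ) (h10 : 0 ≤ α₁) (h30 : 0 ≤ α₃) (h12 : α₂ ≤ α₁)
    (h13 : α₁ + α₃ < 1) : ¬ ForcingTriple α₁ α₂ α₃ := by
  have ht0 : 0 ≤ (α₁ + 1 - α₃)/2 := by linarith
  have ht1 : (α₁ + 1 - α₃)/2 ≤ 1 := by linarith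
  set x : ℝ := Real.sqrt ((α₁ + 1 - α₃)/2) with hxdef
  have hx0 : 0 ≤ x := Real.sqrt_nonneg _
  have hxsq : x^2 = (α₁ + 1 - α₃)/2 := Real.sq_sqrt ht0
  have hx1 : x ≤ 1 := by
    rw [hxdef]
    calc Real.sqrt ((α₁ + 1 - α₃)/2) ≤ Real.sqrt 1 := Real.sqrt_le_sqrt ht1
    _ = 1 := Real.sqrt_one
  apply lemA α₁ α₂ α₃ x 0 hx0 le_rfl (by linarith)
  · rw [hxsq]; linarith
  · have : α₂ < x^2 := by rw [hxsq]; linarith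
    nlinarith [sq_nonneg (1 - x - 0)]
  · rw [hxsq]; linarith

theorem trivial_non_forcing_conditions
    (α₁ α₂ α₃ : ℝ) (h1 : α₁ ∈ Set.Icc (0:ℝ) 1) (h2 : α₂ ∈ Set.Icc (0:ℝ) 1)
    (h3 : α₃ ∈ Set.Icc (0:ℝ) 1) (h12 : α₁ ≥ α₂) (h23 : α₂ ≥ α₃)
    (hcase :
      α₁ < (1 + tau^2) / 2 ∨
      α₂ < 1/4 ∨
      α₁ + α₂ < 1 ∨
      ∃ x y : ℝ, 0 ≤ x ∧ 0 ≤ y ∧ x + y ≤ 1 ∧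
        α₁ = x^2 + y^2 ∧ α₂ = x^2 + (1-x-y)^2 ∧ 2*x^2 + (1-x-y)^2 < 1) :
    ¬ ForcingTriple α₁ α₂ α₃ := by
  have h10 : 0 ≤ α₁ := h1.1
  have h11 : α₁ ≤ 1 := h1.2
  have h20 : 0 ≤ α₂ := h2.1
  have h30 : 0 ≤ α₃ := h3.1
  have s := Real.sqrt 7
  rcases hcase with ha | hb | hc | ⟨x, y, hx, hy, hxy, hα1, hα2, hlt⟩
  · -- case (a): balanced tripartite construction
    set s : ℝ := Real.sqrt 7 with hsdef
    have hs0 : 0 ≤ s := Real.sqrt_nonneg 7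
    have hs : s^2 = 7 := Real.sq_sqrt (by norm_num)
    have hs3 : s ≤ 3 := by nlinarith
    have hs2 : 2 ≤ s := by nlinarith
    apply lemA α₁ α₂ α₃ ((1+2*s)/9) ((4-s)/9)
    · positivity
    · linarith
    · linarith
    · have : ((1+2*s)/9)^2 + ((4-s)/9)^2 = (1 + tau^2)/2 := by
        rw [tau, ← hsdef]
        field_simp
        ring_nf
        linarith [hs]
      linarith
    · have hz : 1 - (1+2*s)/9 - (4-s)/9 = (4-s)/9 := by ring
      rw [hz]
      have : ((1+2*s)/9)^2 + ((4-s)/9)^2 = (1 + tau^2)/2 := by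
        rw [tau, ← hsdef]
        field_simp
        ring_nf
        linarith [hs]
      linarith
    · have : 1 - ((1+2*s)/9)^2 = (1 + tau^2)/2 := by
        rw [tau, ← hsdef]
        field_simp
        ring_nf
        linarith [hs]
      linarith
  · exact lemB α₁ α₂ α₃ (1/2) (1/2) (by norm_num) (by norm_num) (by norm_num)
      (by norm_num; linarith) (by norm_num; linarith)
  · exact lemC α₁ α₂ α₃ h10 h30 h12 (by linarith)
  · obtain ⟨z, hzdef⟩ : ∃ z : ℝ, z = 1 - x - y := ⟨_, rfl⟩
    rw [← hzdef] at hα2 hlt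
    have hz0 : 0 ≤ z := by rw [hzdef]; linarith
    have hxyz : x + y + z = 1 := by rw [hzdef]; ring
    have hzy : z ≤ y := by nlinarith
    have hx1' : x ≤ 1 := by linarith
    rcases le_or_gt y x with hxge | hxlt
    · -- x ≥ y : perturb
      have hy0 : 0 < y := by
        rcases lt_or_eq_of_le hy with h | h
        · exact h
        · exfalso
          have hyz : y = 0 := h.symm
          have hz00 : z = 0 := le_antisymm (hyz ▸ hzy) hz0
          have hxx : x = 1 := by rw [hz00] at hxyz; linarith
          rw [hxx, hz00] at hlt
          norm_num at hlt
      have hδ : 0 < 1 - 2*x^2 - z^2 := by linarith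
      obtain ⟨ε, hεdef⟩ : ∃ ε : ℝ, ε = min y ((1 - 2*x^2 - z^2)/4) := ⟨_, rfl⟩
      have hε0 : 0 < ε := by rw [hεdef]; exact lt_min hy0 (by linarith)
      have hεy : ε ≤ y := by rw [hεdef]; exact min_le_left _ _
      have hεδ : ε ≤ (1 - 2*x^2 - z^2)/4 := by rw [hεdef]; exact min_le_right _ _
      have hε1 : ε ≤ 1 := le_trans hεδ (by nlinarith [sq_nonneg x, sq_nonneg z])
      have e1 : 0 ≤ ε*(x-y) := mul_nonneg hε0.le (by linarith)
      have e2 : 0 < ε*ε := mul_pos hε0 hε0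
      have e3 : 0 ≤ ε*x := mul_nonneg hε0.le hx
      have e4 : ε*x ≤ ε := by
        have := mul_le_mul_of_nonneg_left hx1' hε0.le
        linarith [this]
      have e5 : ε*ε ≤ ε := by
        have := mul_le_mul_of_nonneg_left hε1 hε0.le
        linarith [this]
      apply lemA α₁ α₂ α₃ (x + ε) (y - ε)
      · linarith
      · linarith
      · linarith
      · rw [hα1]
        have expand2 : (x+ε)^2+(y-ε)^2 = x^2+y^2+2*(ε*(x-y))+2*(ε*ε) := by ring
        linarith [e1, e2, expand2]
      · have hz' : 1 - (x+ε) - (y-ε) = z := by rw [hzdef]; ring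
        rw [hz', hα2]
        have expand3 : (x+ε)^2 = x^2+2*(ε*x)+ε*ε := by ring
        linarith [e2, e3, expand3]
      · have hle : α₃ ≤ x^2 + z^2 := by rw [hα2] at h23; exact h23
        have expand3 : (x+ε)^2 = x^2+2*(ε*x)+ε*ε := by ring
        linarith [e4, e5, hεδ, hδ, hle, expand3]
    · -- x < y
      by_cases hsmall : α₂ < 1/4
      · refine lemB α₁ α₂ α₃ (1/2) (1/2) (by norm_num) (by norm_num) (by norm_num) ?_ ?_
        · norm_num; linarith
        · norm_num; linarith
      · push_neg at hsmall
        have h13 : α₁ + α₃ < 1 := by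
          have hsum : α₁ + α₂ = 2*x^2 + y^2 + z^2 := by rw [hα1, hα2]; ring
          have hsq1 : (x+y+z)^2 = 1 := by rw [hxyz]; norm_num
          have key : 2*x^2 + y^2 + z^2 < 1 := by
            have hexp : (x+y+z)^2 = x^2+y^2+z^2+2*(x*y)+2*(x*z)+2*(y*z) := by ring
            rcases lt_or_eq_of_le hx with hx0 | hx0
            · have h1xy : x*x < x*y := mul_lt_mul_of_pos_left hxlt hx0
              linarith [h1xy, mul_nonneg hx hy, mul_nonneg hx hz0, mul_nonneg hy hz0, hsq1, hexp]
            · have hx0' : x = 0 := hx0.symm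
              have hz05 : 0 < z := by
                by_contra hzc
                push_neg at hzc
                have hzz : z = 0 := le_antisymm hzc hz0
                rw [hα2, hzz, hx0'] at hsmall
                norm_num at hsmall
              have hyz0 : 0 < y*z := mul_pos (by linarith) hz05
              have hxx : x*x = 0 := by rw [hx0']; ring
              linarith [hyz0, hsq1, hexp, hxx, mul_nonneg hx hy, mul_nonneg hx hz0]
          linarith
        exact lemC α₁ α₂ α₃ h10 h30 h12 h13
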